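/- For every λ with 0 < λ < 1 and every μ ≥ 1, there exists a unique pair (γ*, β*) ∈ [0,1]×[0,1] maximizing the function f(γ,β) := ((μ−1)/2)·log(1 + γ·P1/σ²) + R_sum(γ,β) + (λ/2)·log(Q / D(γ,β)) over [0,1]×[0,1]; i.e., f attains its supremum over the square at exactly one point. -/

import Mathlib

noncomputable def Lfun (P1 P2 Q σ2 γ β : ℝ) : ℝ :=
  P1 + P2 + Q + σ2 + 2 * Real.sqrt ((1 - γ) * P1 * Q) + 2 * Real.sqrt ((1 - β) * P2 * Q)
    + 2 * Real.sqrt ((1 - γ) * (1 - β) * P1 * P2)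

noncomputable def Dfun (P1 P2 Q σ2 γ β : ℝ) : ℝ :=
  Q * (σ2 + γ * P1 + β * P2) / Lfun P1 P2 Q σ2 γ β

noncomputable def Rsum (P1 P2 σ2 γ β : ℝ) : ℝ :=
  (1 / 2) * Real.log (1 + (γ * P1 + β * P2) / σ2)

/-!
Since `Q / D = L / (σ² + γ P1 + β P2)`, up to an additive constant the objective is
`((μ - 1) / 2) log (σ² + γ P1) + ((1 - λ) / 2) log (σ² + γ P1 + β P2) + (λ / 2) log L(γ, β)`.
The first two terms are concave (logarithms of affine functions with nonnegative weights, as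
`μ ≥ 1` and `λ < 1`). `L` is strictly concave on the square: `√(γ̄ P1 Q) + √(β̄ P2 Q)` is a sum of
strictly concave functions of the two separate coordinates, and `√(γ̄ β̄ P1 P2)` is the geometric
mean of two affine functions. Hence `log L` is strictly concave, and as `λ > 0` so is the
objective; a continuous strictly concave function on a compact convex set has exactly one
maximiser.
-/

open Real Set

section Concavity

variable {E : Type*} [AddCommMonoid E] [Module ℝ E] {s : Set E} {f g : E → ℝ}

theorem ConcaveOn.log (hf : ConcaveOn ℝ s f) (hpos : ∀ x ∈ s, 0 < f x) :
    ConcaveOn ℝ s fun x => log (f x) :=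
  ⟨hf.1, fun x hx y hy _ _ ha hb hab =>
    (strictConcaveOn_log_Ioi.concaveOn.2 (hpos x hx) (hpos y hy) ha hb hab).trans
      (log_le_log (convex_Ioi (0 : ℝ) (hpos x hx) (hpos y hy) ha hb hab) (hf.2 hx hy ha hb hab))⟩

theorem StrictConcaveOn.log (hf : StrictConcaveOn ℝ s f) (hpos : ∀ x ∈ s, 0 < f x) :
    StrictConcaveOn ℝ s fun x => log (f x) :=
  ⟨hf.1, fun x hx y hy hxy _ _ ha hb hab =>
    (strictConcaveOn_log_Ioi.concaveOn.2 (hpos x hx) (hpos y hy) ha.le hb.le hab).trans_lt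
      (log_lt_log (convex_Ioi (0 : ℝ) (hpos x hx) (hpos y hy) ha.le hb.le hab)
        (hf.2 hx hy hxy ha hb hab))⟩

theorem StrictConcaveOn.const_mul {c : ℝ} (hc : 0 < c) (hf : StrictConcaveOn ℝ s f) :
    StrictConcaveOn ℝ s fun x => c * f x :=
  ⟨hf.1, fun x hx y hy hxy a b ha hb hab => by
    have := mul_lt_mul_of_pos_left (hf.2 hx hy hxy ha hb hab) hc
    simp only [smul_eq_mul] at this ⊢
    linarith⟩

theorem mul_sqrt_mul_add_mul_sqrt_mul_le {a b u₁ v₁ u₂ v₂ : ℝ} (ha : 0 ≤ a) (hb : 0 ≤ b)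
    (hu₁ : 0 ≤ u₁) (hv₁ : 0 ≤ v₁) (hu₂ : 0 ≤ u₂) (hv₂ : 0 ≤ v₂) :
    a * √(u₁ * v₁) + b * √(u₂ * v₂) ≤ √((a * u₁ + b * u₂) * (a * v₁ + b * v₂)) := by
  obtain ⟨p, hp, rfl⟩ : ∃ p, 0 ≤ p ∧ p ^ 2 = u₁ := ⟨√u₁, sqrt_nonneg _, sq_sqrt hu₁⟩
  obtain ⟨q, hq, rfl⟩ : ∃ q, 0 ≤ q ∧ q ^ 2 = v₁ := ⟨√v₁, sqrt_nonneg _, sq_sqrt hv₁⟩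
  obtain ⟨r, hr, rfl⟩ : ∃ r, 0 ≤ r ∧ r ^ 2 = u₂ := ⟨√u₂, sqrt_nonneg _, sq_sqrt hu₂⟩
  obtain ⟨t, ht, rfl⟩ : ∃ t, 0 ≤ t ∧ t ^ 2 = v₂ := ⟨√v₂, sqrt_nonneg _, sq_sqrt hv₂⟩
  rw [← mul_pow, ← mul_pow, sqrt_sq (by positivity), sqrt_sq (by positivity),
    le_sqrt (by positivity) (by positivity)]
  -- Cauchy–Schwarz via Lagrange's identity
  nlinarith [mul_nonneg (mul_nonneg ha hb) (sq_nonneg (p * t - r * q))]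

theorem ConcaveOn.sqrt_mul (hf : ConcaveOn ℝ s f) (hg : ConcaveOn ℝ s g)
    (hf₀ : ∀ x ∈ s, 0 ≤ f x) (hg₀ : ∀ x ∈ s, 0 ≤ g x) :
    ConcaveOn ℝ s fun x => √(f x * g x) := by
  refine ⟨hf.1, fun x hx y hy a b ha hb hab => ?_⟩
  have hz := hf.1 hx hy ha hb hab
  have hfz := hf.2 hx hy ha hb hab
  have hgz := hg.2 hx hy ha hb hab
  simp only [smul_eq_mul] at hfz hgz ⊢
  calc a * √(f x * g x) + b * √(f y * g y)
      ≤ √((a * f x + b * f y) * (a * g x + b * g y)) :=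
        mul_sqrt_mul_add_mul_sqrt_mul_le ha hb (hf₀ x hx) (hg₀ x hx) (hf₀ y hy) (hg₀ y hy)
    _ ≤ √(f (a • x + b • y) * g (a • x + b • y)) :=
        sqrt_le_sqrt (mul_le_mul hfz hgz (by have := hg₀ x hx; have := hg₀ y hy; positivity)
          (hf₀ _ hz))

end Concavity

theorem StrictConcaveOn.prod_add {E F : Type*} [AddCommMonoid E] [Module ℝ E] [AddCommMonoid F]
    [Module ℝ F] {s : Set E} {t : Set F} {f : E → ℝ} {g : F → ℝ} (hf : StrictConcaveOn ℝ s f)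
    (hg : StrictConcaveOn ℝ t g) :
    StrictConcaveOn ℝ (s ×ˢ t) fun p => f p.1 + g p.2 := by
  refine ⟨hf.1.prod hg.1, fun x hx y hy hxy a b ha hb hab => ?_⟩
  simp only [smul_eq_mul, Prod.fst_add, Prod.snd_add, Prod.smul_fst, Prod.smul_snd]
  have h₁ := hf.concaveOn.2 hx.1 hy.1 ha.le hb.le hab
  have h₂ := hg.concaveOn.2 hx.2 hy.2 ha.le hb.le hab
  simp only [smul_eq_mul] at h₁ h₂
  rcases ne_or_eq x.1 y.1 with h | h
  · have := hf.2 hx.1 hy.1 h ha hb hab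
    simp only [smul_eq_mul] at this
    linarith
  · have := hg.2 hx.2 hy.2 (fun h' => hxy (Prod.ext h h')) ha hb hab
    simp only [smul_eq_mul] at this
    linarith

theorem StrictConcaveOn.existsUnique_isMaxOn {E : Type*} [TopologicalSpace E] [AddCommMonoid E]
    [Module ℝ E] {s : Set E} {f : E → ℝ} (hf : StrictConcaveOn ℝ s f) (hfc : ContinuousOn f s)
    (hs : IsCompact s) (hne : s.Nonempty) : ∃! x, x ∈ s ∧ IsMaxOn f s x := by
  obtain ⟨x, hx, hmax⟩ := hs.exists_isMaxOn hne hfc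
  exact ⟨x, ⟨hx, hmax⟩, fun y ⟨hy, hymax⟩ => hf.eq_of_isMaxOn hymax hmax hy hx⟩

theorem concaveOn_affine {s : Set (ℝ × ℝ)} (hs : Convex ℝ s) (c a b : ℝ) :
    ConcaveOn ℝ s fun q => c + q.1 * a + q.2 * b :=
  ⟨hs, fun x _ y _ u v _ _ huv => le_of_eq (by
    simp only [smul_eq_mul, Prod.fst_add, Prod.snd_add, Prod.smul_fst, Prod.smul_snd]
    linear_combination c * huv)⟩

theorem strictConcaveOn_sqrt_one_sub_mul {c : ℝ} (hc : 0 < c) :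
    StrictConcaveOn ℝ (Iic 1) fun γ => √((1 - γ) * c) := by
  refine ⟨convex_Iic 1, fun x hx y hy hxy a b ha hb hab => ?_⟩
  have hx' : (1 - x) * c ∈ Ici 0 := mem_Ici.2 (mul_nonneg (sub_nonneg.2 hx) hc.le)
  have hy' : (1 - y) * c ∈ Ici 0 := mem_Ici.2 (mul_nonneg (sub_nonneg.2 hy) hc.le)
  have hne : (1 - x) * c ≠ (1 - y) * c := fun h => hxy (by
    have := mul_right_cancel₀ hc.ne' h; linarith)
  have hsqrt := strictConcaveOn_sqrt.2 hx' hy' hne ha hb hab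
  simp only [smul_eq_mul] at hsqrt ⊢
  convert hsqrt using 2
  linear_combination (-c) * hab

theorem Lfun_pos {P1 P2 Q σ2 : ℝ} (hP1 : 0 ≤ P1) (hP2 : 0 ≤ P2) (hQ : 0 ≤ Q) (hσ : 0 < σ2)
    (γ β : ℝ) : 0 < Lfun P1 P2 Q σ2 γ β := by
  unfold Lfun
  positivity

theorem strictConcaveOn_Lfun {P1 P2 Q σ2 : ℝ} (hP1 : 0 < P1) (hP2 : 0 < P2) (hQ : 0 < Q) :
    StrictConcaveOn ℝ (Icc 0 1 ×ˢ Icc 0 1) fun p : ℝ × ℝ => Lfun P1 P2 Q σ2 p.1 p.2 := by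
  have hsq : Convex ℝ (Icc (0 : ℝ) 1 ×ˢ Icc (0 : ℝ) 1) := (convex_Icc 0 1).prod (convex_Icc 0 1)
  have hsep := ((strictConcaveOn_sqrt_one_sub_mul (mul_pos hP1 hQ)).prod_add
    (strictConcaveOn_sqrt_one_sub_mul (mul_pos hP2 hQ))).subset
    (prod_mono Icc_subset_Iic_self Icc_subset_Iic_self) hsq
  have hgm := (concaveOn_affine hsq P1 (-P1) 0).sqrt_mul (concaveOn_affine hsq P2 0 (-P2))
    (fun q hq => by nlinarith [hq.1.2]) (fun q hq => by nlinarith [hq.2.2])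
  refine ((((hgm.smul zero_le_two).add_strictConcaveOn (hsep.const_mul two_pos)).add_const
    (P1 + P2 + Q + σ2))).congr fun q _ => ?_
  simp only [Lfun, Pi.add_apply, smul_eq_mul]
  ring_nf

noncomputable def objective (P1 P2 Q σ2 lam μ : ℝ) (q : ℝ × ℝ) : ℝ :=
  ((μ - 1) / 2) * Real.log (1 + q.1 * P1 / σ2) + Rsum P1 P2 σ2 q.1 q.2
    + (lam / 2) * Real.log (Q / Dfun P1 P2 Q σ2 q.1 q.2)

section Objective

variable {P1 P2 Q σ2 : ℝ} (lam μ : ℝ)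

theorem objective_eq (hP1 : 0 < P1) (hP2 : 0 < P2) (hQ : 0 < Q) (hσ : 0 < σ2) {q : ℝ × ℝ}
    (hq : q ∈ Icc 0 1 ×ˢ Icc 0 1) :
    objective P1 P2 Q σ2 lam μ q
      = (μ - 1) / 2 * log (σ2 + q.1 * P1) + (1 - lam) / 2 * log (σ2 + q.1 * P1 + q.2 * P2)
        + lam / 2 * log (Lfun P1 P2 Q σ2 q.1 q.2) - μ / 2 * log σ2 := by
  obtain ⟨⟨hγ, -⟩, hβ, -⟩ := hq
  have hA : 0 < σ2 + q.1 * P1 := by positivity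
  have hB : 0 < σ2 + q.1 * P1 + q.2 * P2 := by positivity
  have hL := Lfun_pos hP1.le hP2.le hQ.le hσ q.1 q.2
  have e₁ : 1 + q.1 * P1 / σ2 = (σ2 + q.1 * P1) / σ2 := by field_simp
  have e₂ : 1 + (q.1 * P1 + q.2 * P2) / σ2 = (σ2 + q.1 * P1 + q.2 * P2) / σ2 := by
    field_simp; ring
  have e₃ : Q / Dfun P1 P2 Q σ2 q.1 q.2
      = Lfun P1 P2 Q σ2 q.1 q.2 / (σ2 + q.1 * P1 + q.2 * P2) := by
    rw [Dfun, div_div_eq_mul_div, mul_div_mul_left _ _ hQ.ne']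
  rw [objective, Rsum, e₁, e₂, e₃, log_div hA.ne' hσ.ne', log_div hB.ne' hσ.ne',
    log_div hL.ne' hB.ne']
  ring

theorem strictConcaveOn_objective (hP1 : 0 < P1) (hP2 : 0 < P2) (hQ : 0 < Q) (hσ : 0 < σ2)
    (hlam : 0 < lam) (hlam1 : lam < 1) (hμ : 1 ≤ μ) :
    StrictConcaveOn ℝ (Icc 0 1 ×ˢ Icc 0 1) (objective P1 P2 Q σ2 lam μ) := by
  have hsq : Convex ℝ (Icc (0 : ℝ) 1 ×ˢ Icc (0 : ℝ) 1) := (convex_Icc 0 1).prod (convex_Icc 0 1)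
  have h₁ := (concaveOn_affine hsq σ2 P1 0).log fun q ⟨⟨hγ, _⟩, _⟩ => by
    rw [mul_zero, add_zero]; positivity
  have h₂ := (concaveOn_affine hsq σ2 P1 P2).log fun q ⟨⟨hγ, _⟩, hβ, _⟩ => by positivity
  have h₃ := (strictConcaveOn_Lfun (σ2 := σ2) hP1 hP2 hQ).log fun q _ =>
    Lfun_pos hP1.le hP2.le hQ.le hσ q.1 q.2
  have hc₁ : 0 ≤ (μ - 1) / 2 := by linarith
  have hc₂ : 0 ≤ (1 - lam) / 2 := by linarith
  refine ((((h₁.smul hc₁).add (h₂.smul hc₂)).add_strictConcaveOn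
    (h₃.const_mul (half_pos hlam))).add_const (-(μ / 2 * log σ2))).congr fun q hq => ?_
  simp only [Pi.add_apply, smul_eq_mul, mul_zero, add_zero, objective_eq lam μ hP1 hP2 hQ hσ hq]
  ring

theorem continuousOn_objective (hP1 : 0 < P1) (hP2 : 0 < P2) (hQ : 0 < Q) (hσ : 0 < σ2) :
    ContinuousOn (objective P1 P2 Q σ2 lam μ) (Icc 0 1 ×ˢ Icc 0 1) := by
  refine ContinuousOn.congr ?_ fun q hq => objective_eq lam μ hP1 hP2 hQ hσ hq
  have hL : Continuous fun q : ℝ × ℝ => Lfun P1 P2 Q σ2 q.1 q.2 := by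
    unfold Lfun; fun_prop
  refine ((((continuousOn_const.mul (ContinuousOn.log (by fun_prop) ?_)).add
    (continuousOn_const.mul (ContinuousOn.log (by fun_prop) ?_))).add
    (continuousOn_const.mul (hL.continuousOn.log ?_))).sub continuousOn_const)
  · rintro q ⟨⟨hγ, _⟩, _⟩; positivity
  · rintro q ⟨⟨hγ, _⟩, hβ, _⟩; positivity
  · exact fun q _ => (Lfun_pos hP1.le hP2.le hQ.le hσ q.1 q.2).ne'

end Objective

theorem stmt_4 (P1 P2 Q σ2 : ℝ) (hP1 : 0 < P1) (hP2 : 0 < P2) (hQ : 0 < Q) (hσ : 0 < σ2)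
    (lam μ : ℝ) (hlam : 0 < lam) (hlam1 : lam < 1) (hμ : 1 ≤ μ) :
    ∃! p : ℝ × ℝ, p ∈ Set.Icc (0:ℝ) 1 ×ˢ Set.Icc (0:ℝ) 1 ∧
      ∀ q ∈ Set.Icc (0:ℝ) 1 ×ˢ Set.Icc (0:ℝ) 1,
        ((μ - 1) / 2) * Real.log (1 + q.1 * P1 / σ2) + Rsum P1 P2 σ2 q.1 q.2
            + (lam / 2) * Real.log (Q / Dfun P1 P2 Q σ2 q.1 q.2)
          ≤ ((μ - 1) / 2) * Real.log (1 + p.1 * P1 / σ2) + Rsum P1 P2 σ2 p.1 p.2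
            + (lam / 2) * Real.log (Q / Dfun P1 P2 Q σ2 p.1 p.2) :=
  (strictConcaveOn_objective lam μ hP1 hP2 hQ hσ hlam hlam1 hμ).existsUnique_isMaxOn
    (continuousOn_objective lam μ hP1 hP2 hQ hσ) (isCompact_Icc.prod isCompact_Icc)
    ⟨(0, 0), ⟨le_rfl, zero_le_one⟩, le_rfl, zero_le_one⟩
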